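/- arXiv:2510.06028 — 4 statements merged into one kernel-verified Lean document; each statement's English description precedes it below -/
import Mathlib

section
/- For any β > 0, -ln Z_β(x) = ∫₀^β E_{h∼G_γ(x)}[L̂(h,x)] dγ. -/
open MeasureTheory

/-- The partition function `Z_β(x) = ∫ exp (-β L̂(h,x)) dπ(h)` (the sample `x` is fixed). -/
noncomputable def partitionZ {H : Type*} [MeasurableSpace H] (pri : Measure H)
    (Lhat : H → ℝ) (β : ℝ) : ℝ :=
  ∫ h, Real.exp (-β * Lhat h) ∂pri

/-- The Gibbs posterior `G_β(x)`, with density `exp(-β L̂(h,x))/Z_β(x)` w.r.t. the prior `π`. -/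
noncomputable def gibbs {H : Type*} [MeasurableSpace H] (pri : Measure H)
    (Lhat : H → ℝ) (β : ℝ) : Measure H :=
  pri.withDensity (fun h => ENNReal.ofReal (Real.exp (-β * Lhat h) / partitionZ pri Lhat β))

/-!
`Z_γ` is the moment generating function of `-L̂` and the Gibbs posterior `G_γ` is the prior tilted
by `-γ L̂`, so `-log Z_γ = -cgf(-L̂)(γ)`. For bounded `L̂` the cumulant generating function is
analytic on all of `ℝ`, with derivative the mean of `-L̂` under the tilted measure; the theorem is
the fundamental theorem of calculus on `[0, β]`, using `cgf(0) = 0`.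
-/

namespace ProbabilityTheory

variable {Ω : Type*} [MeasurableSpace Ω] {μ : Measure Ω} {X : Ω → ℝ}

lemma integrableExpSet_eq_univ_of_mem_Icc [IsFiniteMeasure μ] {a b : ℝ} (hX : AEMeasurable X μ)
    (hb : ∀ᵐ ω ∂μ, X ω ∈ Set.Icc a b) : integrableExpSet X μ = Set.univ :=
  Set.eq_univ_of_forall fun _ => integrable_exp_mul_of_mem_Icc hX hb

lemma cgf_eq_intervalIntegral_tilted [IsZeroOrProbabilityMeasure μ]
    (hX : integrableExpSet X μ = Set.univ) (β : ℝ) :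
    cgf X μ β = ∫ t in (0 : ℝ)..β, (μ.tilted (t * X ·))[X] := by
  have hint : ∀ t, t ∈ interior (integrableExpSet X μ) := by simp [hX]
  have hanalytic : AnalyticOnNhd ℝ (cgf X μ) Set.univ := fun t _ => analyticAt_cgf (hint t)
  have hcont : Continuous (deriv (cgf X μ)) := (hanalytic.deriv.contDiff (n := 0)).continuous
  simp_rw [integral_tilted_mul_self (hint _)]
  rw [intervalIntegral.integral_deriv_eq_sub
    (fun t _ => hanalytic.differentiableOn.differentiableAt Filter.univ_mem)
    (hcont.intervalIntegrable 0 β), cgf_zero, sub_zero]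

end ProbabilityTheory

open ProbabilityTheory

section Gibbs

variable {H : Type*} [MeasurableSpace H] (pri : Measure H) (Lhat : H → ℝ)

lemma partitionZ_eq_mgf (β : ℝ) : partitionZ pri Lhat β = mgf (-Lhat ·) pri β := by
  simp only [partitionZ, mgf, neg_mul, mul_neg]

lemma gibbs_eq_tilted (β : ℝ) : gibbs pri Lhat β = pri.tilted (β * -Lhat ·) := by
  simp only [gibbs, Measure.tilted, partitionZ, neg_mul, mul_neg]

end Gibbs

theorem neg_log_partition_eq_integral_general {H : Type*} [MeasurableSpace H]
    (pri : Measure H) [IsProbabilityMeasure pri]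
    (Lhat : H → ℝ) (hmeas : Measurable Lhat) (hnonneg : ∀ h, 0 ≤ Lhat h)
    (m : ℝ) (hbound : ∀ h, Lhat h ≤ m) (β : ℝ) :
    -Real.log (partitionZ pri Lhat β)
      = ∫ γ in (0 : ℝ)..β, ∫ h, Lhat h ∂(gibbs pri Lhat γ) := by
  have hexp : integrableExpSet (-Lhat ·) pri = Set.univ :=
    integrableExpSet_eq_univ_of_mem_Icc (a := -m) (b := 0) hmeas.neg.aemeasurable
      (Filter.Eventually.of_forall fun h => ⟨neg_le_neg (hbound h), neg_nonpos.2 (hnonneg h)⟩)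
  have hcgf := cgf_eq_intervalIntegral_tilted hexp β
  rw [cgf, ← partitionZ_eq_mgf] at hcgf
  simp only [hcgf, gibbs_eq_tilted, integral_neg, intervalIntegral.integral_neg, neg_neg]

/-- for any `β > 0`,
`-ln Z_β(x) = ∫₀^β E_{h∼G_γ(x)}[L̂(h,x)] dγ`. -/
theorem neg_log_partition_eq_integral {H : Type*} [MeasurableSpace H]
    (pri : Measure H) [IsProbabilityMeasure pri]
    (Lhat : H → ℝ) (hmeas : Measurable Lhat) (hnonneg : ∀ h, 0 ≤ Lhat h)
    (m : ℝ) (hbound : ∀ h, Lhat h ≤ m) (β : ℝ) (hβ : 0 < β) :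
    -Real.log (partitionZ pri Lhat β)
      = ∫ γ in (0 : ℝ)..β, ∫ h, Lhat h ∂(gibbs pri Lhat γ) :=
  neg_log_partition_eq_integral_general pri Lhat hmeas hnonneg m hbound β
end

section
/- Let 0 = β₀ < β₁ < ⋯ < β_K = β. Then -ln Z_β(x) ≤ Σ_{k=1}^K (β_k - β_{k-1}) E_{g∼G_{β_{k-1}}(x)}[L̂(g,x)]. -/
open MeasureTheory

section Aux

variable {H : Type*} [MeasurableSpace H] (pri : Measure H) [IsProbabilityMeasure pri]
    (Lhat : H → ℝ)

lemma integrable_of_bdd (f : H → ℝ) (hf : Measurable f) (C : ℝ) (hC : ∀ h, ‖f h‖ ≤ C) :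
    Integrable f pri :=
  ⟨hf.aestronglyMeasurable, HasFiniteIntegral.of_bounded (C := C) (Filter.Eventually.of_forall hC)⟩

variable (hmeas : Measurable Lhat) (hnonneg : ∀ h, 0 ≤ Lhat h)

include hmeas hnonneg in
lemma integrable_exp_term {γ : ℝ} (hγ : 0 ≤ γ) :
    Integrable (fun h => Real.exp (-γ * Lhat h)) pri := by
  apply integrable_of_bdd pri _ (by fun_prop) 1
  intro h
  rw [Real.norm_eq_abs, abs_of_pos (Real.exp_pos _)]
  apply Real.exp_le_one_iff.2
  have := hnonneg h
  nlinarith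

variable (m : ℝ) (hbound : ∀ h, Lhat h ≤ m)

include hmeas hnonneg hbound in
lemma partitionZ_pos {γ : ℝ} (hγ : 0 ≤ γ) : 0 < partitionZ pri Lhat γ := by
  have h1 : (0:ℝ) < Real.exp (-γ * m) := Real.exp_pos _
  have h2 : Real.exp (-γ * m) ≤ partitionZ pri Lhat γ := by
    have : Real.exp (-γ * m) = ∫ _h, Real.exp (-γ * m) ∂pri := by simp
    rw [this]
    apply integral_mono (integrable_const _) (integrable_exp_term pri Lhat hmeas hnonneg hγ)
    intro h
    apply Real.exp_le_exp.2
    have := hbound h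
    nlinarith
  linarith

include hmeas hnonneg hbound in
lemma integral_gibbs (f : H → ℝ) (hfm : Measurable f) {γ : ℝ} (hγ : 0 ≤ γ) :
    ∫ g, f g ∂(gibbs pri Lhat γ)
      = ∫ h, (Real.exp (-γ * Lhat h) / partitionZ pri Lhat γ) * f h ∂pri := by
  have hZ := partitionZ_pos pri Lhat hmeas hnonneg m hbound hγ
  have hd : ∀ h, ENNReal.ofReal (Real.exp (-γ * Lhat h) / partitionZ pri Lhat γ)
      = ((Real.toNNReal (Real.exp (-γ * Lhat h) / partitionZ pri Lhat γ) : NNReal) : ENNReal) := by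
    intro h; rfl
  rw [gibbs]
  simp_rw [hd]
  rw [integral_withDensity_eq_integral_smul (by fun_prop)]
  congr 1
  ext h
  rw [NNReal.smul_def, Real.coe_toNNReal _ (by positivity), smul_eq_mul]

include hmeas hnonneg hbound in
lemma isProb_gibbs {γ : ℝ} (hγ : 0 ≤ γ) : IsProbabilityMeasure (gibbs pri Lhat γ) := by
  have hZ := partitionZ_pos pri Lhat hmeas hnonneg m hbound hγ
  constructor
  rw [gibbs, withDensity_apply _ MeasurableSet.univ, Measure.restrict_univ]
  rw [← ofReal_integral_eq_lintegral_ofReal]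
  · have : ∫ h, Real.exp (-γ * Lhat h) / partitionZ pri Lhat γ ∂pri
        = partitionZ pri Lhat γ / partitionZ pri Lhat γ := by
      rw [integral_div]; rfl
    rw [this, div_self hZ.ne', ENNReal.ofReal_one]
  · exact (integrable_exp_term pri Lhat hmeas hnonneg hγ).div_const _
  · exact Filter.Eventually.of_forall fun h => by positivity

include hmeas hnonneg hbound in
lemma step_lemma {γ δ : ℝ} (hγ : 0 ≤ γ) (hδ : 0 ≤ δ) :
    -Real.log (partitionZ pri Lhat (γ + δ))
      ≤ -Real.log (partitionZ pri Lhat γ)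
        + δ * ∫ g, Lhat g ∂(gibbs pri Lhat γ) := by
  have hZγ := partitionZ_pos pri Lhat hmeas hnonneg m hbound hγ
  have hZγδ := partitionZ_pos pri Lhat hmeas hnonneg m hbound (by linarith : (0:ℝ) ≤ γ + δ)
  have hprob := isProb_gibbs pri Lhat hmeas hnonneg m hbound hγ
  -- Jensen: exp (∫ -δ L dG) ≤ ∫ exp(-δ L) dG
  have hintL : Integrable (fun h => -δ * Lhat h) (gibbs pri Lhat γ) := by
    apply integrable_of_bdd _ _ (by fun_prop) (δ * m)
    intro h
    rw [Real.norm_eq_abs, neg_mul, abs_neg, abs_mul, abs_of_nonneg hδ,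
      abs_of_nonneg (hnonneg h)]
    have := hbound h; nlinarith
  have hintE : Integrable (fun h => Real.exp (-δ * Lhat h)) (gibbs pri Lhat γ) := by
    apply integrable_of_bdd _ _ (by fun_prop) 1
    intro h
    rw [Real.norm_eq_abs, abs_of_pos (Real.exp_pos _)]
    apply Real.exp_le_one_iff.2
    have := hnonneg h; nlinarith
  have jensen := convexOn_exp.map_integral_le (μ := gibbs pri Lhat γ)
    (f := fun h => -δ * Lhat h) Real.continuous_exp.continuousOn isClosed_univ
    (Filter.Eventually.of_forall fun _ => Set.mem_univ _) hintL hintE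
  -- compute ∫ exp(-δ L) dG = Z(γ+δ)/Zγ
  have hcomp : ∫ h, Real.exp (-δ * Lhat h) ∂(gibbs pri Lhat γ)
      = partitionZ pri Lhat (γ + δ) / partitionZ pri Lhat γ := by
    rw [integral_gibbs pri Lhat hmeas hnonneg m hbound _ (by fun_prop) hγ]
    have : ∀ h, (Real.exp (-γ * Lhat h) / partitionZ pri Lhat γ) * Real.exp (-δ * Lhat h)
        = Real.exp (-(γ + δ) * Lhat h) / partitionZ pri Lhat γ := by
      intro h
      rw [div_mul_eq_mul_div, ← Real.exp_add]
      ring_nf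
    simp_rw [this]
    rw [integral_div]
    rfl
  have hmean : ∫ h, -δ * Lhat h ∂(gibbs pri Lhat γ)
      = -δ * ∫ g, Lhat g ∂(gibbs pri Lhat γ) := integral_const_mul _ _
  rw [hcomp, hmean] at jensen
  -- conclude via log
  have h1 : partitionZ pri Lhat γ * Real.exp (-δ * ∫ g, Lhat g ∂(gibbs pri Lhat γ))
      ≤ partitionZ pri Lhat (γ + δ) := by
    rw [← le_div_iff₀' hZγ]; exact jensen
  have h2 := Real.log_le_log (by positivity) h1
  rw [Real.log_mul hZγ.ne' (Real.exp_pos _).ne', Real.log_exp] at h2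
  linarith

end Aux

/-- for a partition `0 = β₀ < β₁ < ⋯ < β_K = β`,
`-ln Z_β(x) ≤ Σ_{k=1}^K (β_k - β_{k-1}) E_{g∼G_{β_{k-1}}(x)}[L̂(g,x)]`. -/
theorem neg_log_partition_le_sum {H : Type*} [MeasurableSpace H]
    (pri : Measure H) [IsProbabilityMeasure pri]
    (Lhat : H → ℝ) (hmeas : Measurable Lhat) (hnonneg : ∀ h, 0 ≤ Lhat h)
    (m : ℝ) (hbound : ∀ h, Lhat h ≤ m)
    (K : ℕ) (hK : 0 < K) (βs : Fin (K + 1) → ℝ)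
    (hmono : StrictMono βs) (h0 : βs 0 = 0) (β : ℝ) (hβ : βs (Fin.last K) = β) :
    -Real.log (partitionZ pri Lhat β)
      ≤ ∑ k : Fin K, (βs k.succ - βs k.castSucc)
          * ∫ g, Lhat g ∂(gibbs pri Lhat (βs k.castSucc)) := by
  have hβnn : ∀ i : Fin (K + 1), 0 ≤ βs i := by
    intro i
    rw [← h0]
    exact hmono.monotone (Fin.zero_le i)
  classical
  set f : ℕ → ℝ := fun k =>
    if h : k < K then
      (βs (⟨k, h⟩ : Fin K).succ - βs (⟨k, h⟩ : Fin K).castSucc)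
        * ∫ g, Lhat g ∂(gibbs pri Lhat (βs (⟨k, h⟩ : Fin K).castSucc))
    else 0 with hf
  have key : ∀ n : ℕ, ∀ hn : n ≤ K,
      -Real.log (partitionZ pri Lhat (βs ⟨n, Nat.lt_succ_of_le hn⟩))
        ≤ ∑ k ∈ Finset.range n, f k := by
    intro n
    induction n with
    | zero =>
      intro _
      have h00 : (⟨0, Nat.lt_succ_of_le (Nat.zero_le K)⟩ : Fin (K+1)) = 0 := rfl
      rw [Finset.sum_range_zero, h00, h0]
      have hZ1 : partitionZ pri Lhat 0 = 1 := by rw [partitionZ]; simp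
      rw [hZ1, Real.log_one, neg_zero]
    | succ n ih =>
      intro hn
      have hnK : n < K := hn
      have hle : βs ⟨n, by omega⟩ ≤ βs ⟨n+1, by omega⟩ :=
        (hmono (show (⟨n, by omega⟩ : Fin (K+1)) < ⟨n+1, by omega⟩ by
          simp [Fin.lt_def])).le
      have hγ : 0 ≤ βs (⟨n, by omega⟩ : Fin (K+1)) := hβnn _
      have hδ : (0:ℝ) ≤ βs (⟨n+1, by omega⟩ : Fin (K+1)) - βs ⟨n, by omega⟩ := by linarith
      have hstep := step_lemma pri Lhat hmeas hnonneg m hbound hγ hδ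
      rw [show βs (⟨n, by omega⟩ : Fin (K+1))
          + (βs (⟨n+1, by omega⟩ : Fin (K+1)) - βs ⟨n, by omega⟩)
          = βs (⟨n+1, by omega⟩ : Fin (K+1)) by ring] at hstep
      have hfn : f n = (βs (⟨n+1, by omega⟩ : Fin (K+1)) - βs (⟨n, by omega⟩ : Fin (K+1)))
          * ∫ g, Lhat g ∂(gibbs pri Lhat (βs (⟨n, by omega⟩ : Fin (K+1)))) := by
        rw [hf]
        simp only [hnK, dif_pos]
        rfl
      rw [Finset.sum_range_succ, hfn]
      have hih := ih (by omega)
      have hEq : (⟨n, Nat.lt_succ_of_le (by omega : n ≤ K)⟩ : Fin (K+1)) = ⟨n, by omega⟩ :=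
        rfl
      rw [hEq] at hih
      have hEq2 : (⟨n+1, Nat.lt_succ_of_le (by omega : n+1 ≤ K)⟩ : Fin (K+1))
          = ⟨n+1, by omega⟩ := rfl
      rw [hEq2]
      linarith
  have hfin := key K le_rfl
  have hlast : (⟨K, Nat.lt_succ_of_le le_rfl⟩ : Fin (K+1)) = Fin.last K := rfl
  rw [hlast, hβ] at hfin
  refine hfin.trans ?_
  rw [← Fin.sum_univ_eq_sum_range f K]
  apply le_of_eq
  apply Finset.sum_congr rfl
  intro k _
  rw [hf]
  simp only [k.isLt, dif_pos]
end

section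
/- Let F: H × X^n → ℝ be measurable, β > 0, and 0 = β₀ < β₁ < ⋯ < β_K = β. Define Γ(h,x,β⃗) = -β L̂(h,x) + Σ_{k=1}^K (β_k - β_{k-1}) E_{g∼G_{β_{k-1}}(x)}[L̂(g,x)]. Then for δ > 0, with probability at least 1-δ when x ∼ μⁿ and h ∼ G_β(x): F(h,x) ≤ Γ(h,x,β⃗) + ln E_x E_{g∼π}[e^{F(g,x)}] + ln(1/δ). -/
open MeasureTheory

/-- Empirical loss `L̂(h,x) = (1/n) Σ_i ℓ(h,x_i)`. -/
noncomputable def empLoss {H X : Type*} (n : ℕ) (ℓ : H → X → ℝ) (h : H) (x : Fin n → X) : ℝ :=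
  (∑ i, ℓ h (x i)) / n

/-- Partition function `Z_β(x) = ∫ exp(-β L̂(h,x)) dπ(h)`. -/
noncomputable def partZ {H X : Type*} [MeasurableSpace H] (pri : Measure H) (n : ℕ)
    (ℓ : H → X → ℝ) (β : ℝ) (x : Fin n → X) : ℝ :=
  ∫ h, Real.exp (-β * empLoss n ℓ h x) ∂pri

/-- Gibbs posterior `G_β(x)` with density `exp(-β L̂(h,x))/Z_β(x)` w.r.t. the prior. -/
noncomputable def gibbsP {H X : Type*} [MeasurableSpace H] (pri : Measure H) (n : ℕ)
    (ℓ : H → X → ℝ) (β : ℝ) (x : Fin n → X) : Measure H :=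
  pri.withDensity fun h =>
    ENNReal.ofReal (Real.exp (-β * empLoss n ℓ h x) / partZ pri n ℓ β x)

/-- The bounding functional
`Γ(h,x,β⃗) = -β_K L̂(h,x) + Σ_{k=1}^K (β_k-β_{k-1}) E_{g∼G_{β_{k-1}}(x)}[L̂(g,x)]`. -/
noncomputable def Gam {H X : Type*} [MeasurableSpace H] (pri : Measure H) (n : ℕ)
    (ℓ : H → X → ℝ) {K : ℕ} (βs : Fin (K + 1) → ℝ) (h : H) (x : Fin n → X) : ℝ :=
  -βs (Fin.last K) * empLoss n ℓ h x
    + ∑ k : Fin K, (βs k.succ - βs k.castSucc)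
        * ∫ g, empLoss n ℓ g x ∂(gibbsP pri n ℓ (βs k.castSucc) x)

/-!
Write `Z_c = ∫ exp (-c L̂) dπ`, so that the Gibbs posterior `G_c` is the prior tilted by `-c L̂`.
Jensen's inequality under `G_{β_{k-1}}` gives
`log Z_{β_k} - log Z_{β_{k-1}} ≥ -(β_k - β_{k-1}) E_{G_{β_{k-1}}}[L̂]`, and telescoping from
`Z_{β_0} = Z_0 = 1` yields `-log Z_β ≤ Γ + β L̂`, i.e. the density of `G_β` is at most `exp Γ`.
On the event `Γ + log E[e^F] + log (1/δ) < F` this density is below `δ e^F / E[e^F]`, and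
integrating over `π ⊗ μⁿ` bounds the probability of the event by `δ`.
-/

open Real

lemma Fin.sum_succ_sub_castSucc {M : Type*} [AddCommGroup M] {K : ℕ} (W : Fin (K + 1) → M) :
    ∑ k : Fin K, (W k.succ - W k.castSucc) = W (Fin.last K) - W 0 := by
  induction K with
  | zero => simp
  | succ K ih =>
    rw [Fin.sum_univ_castSucc]
    simp only [Fin.succ_castSucc, Fin.succ_last]
    rw [ih fun k => W k.castSucc]
    simp only [Fin.castSucc_zero]
    abel

section Tilted

variable {α : Type*} [MeasurableSpace α] {μ : Measure α}

lemma integrable_exp_mul_of_abs_le [IsFiniteMeasure μ] {L : α → ℝ} (hL : Measurable L) {C : ℝ}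
    (hLC : ∀ a, |L a| ≤ C) (c : ℝ) : Integrable (fun a => exp (c * L a)) μ := by
  refine .of_bound (by fun_prop) (exp (|c| * C)) (ae_of_all _ fun a => ?_)
  rw [norm_of_nonneg (exp_pos _).le, exp_le_exp]
  calc c * L a ≤ |c| * |L a| := (le_abs_self _).trans (abs_mul c (L a)).le
    _ ≤ |c| * C := mul_le_mul_of_nonneg_left (hLC a) (abs_nonneg c)

lemma integral_tilted_le_log_sub_log [IsProbabilityMeasure μ] {f g : α → ℝ}
    (hf : Integrable (fun a => exp (f a)) μ) (hg : Integrable g (μ.tilted f))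
    (hexpg : Integrable (fun a => exp (g a)) (μ.tilted f)) :
    ∫ a, g a ∂(μ.tilted f) ≤ log (∫ a, exp (f a + g a) ∂μ) - log (∫ a, exp (f a) ∂μ) := by
  have := isProbabilityMeasure_tilted hf
  have hZ : 0 < ∫ a, exp (f a) ∂μ := integral_exp_pos hf
  have jensen : exp (∫ a, g a ∂(μ.tilted f)) ≤ ∫ a, exp (g a) ∂(μ.tilted f) :=
    convexOn_exp.map_integral_le continuous_exp.continuousOn isClosed_univ
      (ae_of_all _ fun _ => Set.mem_univ _) hg hexpg
  rw [integral_exp_tilted] at jensen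
  simp only [Pi.add_apply] at jensen
  have hratio := (exp_pos _).trans_le jensen
  rw [← log_div ((div_pos_iff_of_pos_right hZ).1 hratio).ne' hZ.ne',
    le_log_iff_exp_le hratio]
  exact jensen

variable [IsProbabilityMeasure μ] {L : α → ℝ} {C : ℝ}

lemma neg_sum_mul_integral_tilted_le_log_integral_exp (hL : Measurable L)
    (hLC : ∀ a, |L a| ≤ C) {K : ℕ} (βs : Fin (K + 1) → ℝ) (h0 : βs 0 = 0) :
    -∑ k : Fin K, (βs k.succ - βs k.castSucc) * ∫ a, L a ∂(μ.tilted fun a => -βs k.castSucc * L a)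
      ≤ log (∫ a, exp (-βs (Fin.last K) * L a) ∂μ) := by
  set W : Fin (K + 1) → ℝ := fun j => log (∫ a, exp (-βs j * L a) ∂μ)
  have step : ∀ k : Fin K,
      -((βs k.succ - βs k.castSucc) * ∫ a, L a ∂(μ.tilted fun a => -βs k.castSucc * L a))
        ≤ W k.succ - W k.castSucc := by
    intro k
    have := isProbabilityMeasure_tilted (integrable_exp_mul_of_abs_le (μ := μ) hL hLC
      (-βs k.castSucc))
    have hjensen := integral_tilted_le_log_sub_log (integrable_exp_mul_of_abs_le hL hLC _)
      ((Integrable.of_bound (μ := μ.tilted fun a => -βs k.castSucc * L a)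
        hL.aestronglyMeasurable C (ae_of_all _ hLC)).const_mul
        (-(βs k.succ - βs k.castSucc)))
      (integrable_exp_mul_of_abs_le hL hLC _)
    rw [integral_const_mul, neg_mul] at hjensen
    simpa only [← add_mul, show -βs k.castSucc + -(βs k.succ - βs k.castSucc) = -βs k.succ by ring]
      using hjensen
  have hW0 : W 0 = 0 := by simp [W, h0]
  calc _ = ∑ k : Fin K,
        -((βs k.succ - βs k.castSucc) * ∫ a, L a ∂(μ.tilted fun a => -βs k.castSucc * L a)) :=
        (Finset.sum_neg_distrib _).symm
    _ ≤ ∑ k : Fin K, (W k.succ - W k.castSucc) := Finset.sum_le_sum fun k _ => step k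
    _ = W (Fin.last K) := by rw [Fin.sum_succ_sub_castSucc, hW0, sub_zero]

lemma exp_div_integral_exp_le (hL : Measurable L) (hLC : ∀ a, |L a| ≤ C) {K : ℕ}
    (βs : Fin (K + 1) → ℝ) (h0 : βs 0 = 0) (a : α) :
    exp (-βs (Fin.last K) * L a) / ∫ b, exp (-βs (Fin.last K) * L b) ∂μ
      ≤ exp (-βs (Fin.last K) * L a + ∑ k : Fin K, (βs k.succ - βs k.castSucc)
          * ∫ b, L b ∂(μ.tilted fun b => -βs k.castSucc * L b)) := by
  have hZ := integral_exp_pos (integrable_exp_mul_of_abs_le (μ := μ) hL hLC (-βs (Fin.last K)))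
  rw [← exp_log hZ, ← exp_sub, exp_le_exp]
  linarith [neg_sum_mul_integral_tilted_le_log_integral_exp (μ := μ) hL hLC βs h0]

end Tilted

lemma withDensity_setOf_add_lt_le {α : Type*} [MeasurableSpace α] {μ : Measure α}
    {ρ φ F : α → ℝ} (hφ : Measurable φ) (hF : Measurable F) (hρ : ∀ a, ρ a ≤ exp (φ a))
    (c : ℝ) :
    μ.withDensity (fun a => ENNReal.ofReal (ρ a)) {a | φ a + c < F a}
      ≤ ENNReal.ofReal (exp (-c)) * ∫⁻ a, ENNReal.ofReal (exp (F a)) ∂μ := by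
  rw [withDensity_apply _ (measurableSet_lt (hφ.add_const c) hF)]
  calc ∫⁻ a in {a | φ a + c < F a}, ENNReal.ofReal (ρ a) ∂μ
      ≤ ∫⁻ a in {a | φ a + c < F a}, ENNReal.ofReal (exp (-c)) * ENNReal.ofReal (exp (F a)) ∂μ := by
        refine setLIntegral_mono (by fun_prop) fun a ha => ?_
        rw [← ENNReal.ofReal_mul (exp_pos _).le, ← exp_add]
        exact ENNReal.ofReal_le_ofReal
          ((hρ a).trans (exp_le_exp.2 (by linarith [show φ a + c < F a from ha])))
    _ ≤ ∫⁻ a, ENNReal.ofReal (exp (-c)) * ENNReal.ofReal (exp (F a)) ∂μ :=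
        setLIntegral_le_lintegral _ _
    _ = ENNReal.ofReal (exp (-c)) * ∫⁻ a, ENNReal.ofReal (exp (F a)) ∂μ :=
        lintegral_const_mul _ (by fun_prop)

section EmpiricalLoss

variable {H X : Type*} {n : ℕ} {ℓ : H → X → ℝ}

lemma measurable_empLoss [MeasurableSpace H] [MeasurableSpace X]
    (hℓ : Measurable fun p : H × X => ℓ p.1 p.2) (x : Fin n → X) :
    Measurable fun h => empLoss n ℓ h x :=
  (Finset.measurable_sum _ fun i _ => hℓ.comp (measurable_prodMk_right (y := x i))).div_const _

lemma abs_empLoss_le {C : ℝ} (hC : 0 ≤ C) (hℓ : ∀ h x, |ℓ h x| ≤ C) (h : H) (x : Fin n → X) :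
    |empLoss n ℓ h x| ≤ C := by
  rw [empLoss, abs_div, Nat.abs_cast]
  refine div_le_of_le_mul₀ n.cast_nonneg hC ?_
  calc |∑ i, ℓ h (x i)| ≤ ∑ i, |ℓ h (x i)| := Finset.abs_sum_le_sum_abs _ _
    _ ≤ ∑ _i : Fin n, C := Finset.sum_le_sum fun i _ => hℓ h (x i)
    _ = C * n := by simp [mul_comm]

lemma gibbsP_setOf_lt_le [MeasurableSpace H] [MeasurableSpace X] (pri : Measure H)
    [IsProbabilityMeasure pri] (hℓmeas : Measurable fun p : H × X => ℓ p.1 p.2) {C : ℝ}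
    (hC : 0 ≤ C) (hℓ : ∀ h x, |ℓ h x| ≤ C) {K : ℕ} (βs : Fin (K + 1) → ℝ) (h0 : βs 0 = 0)
    (x : Fin n → X) {F : H → ℝ} (hF : Measurable F) (c : ℝ) :
    gibbsP pri n ℓ (βs (Fin.last K)) x {h | Gam pri n ℓ βs h x + c < F h}
      ≤ ENNReal.ofReal (exp (-c)) * ∫⁻ h, ENNReal.ofReal (exp (F h)) ∂pri :=
  withDensity_setOf_add_lt_le (((measurable_empLoss hℓmeas x).const_mul _).add_const _) hF
    (exp_div_integral_exp_le (measurable_empLoss hℓmeas x) (abs_empLoss_le hC hℓ · x) βs h0) c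

end EmpiricalLoss

theorem main_bound_single_draw_general {H X : Type*} [MeasurableSpace H] [MeasurableSpace X]
    (μ : Measure X) [IsProbabilityMeasure μ]
    (pri : Measure H) [IsProbabilityMeasure pri]
    (n : ℕ)
    (ℓ : H → X → ℝ) (hℓmeas : Measurable fun p : H × X => ℓ p.1 p.2)
    (m : ℝ) (hℓnonneg : ∀ h x, 0 ≤ ℓ h x) (hℓbound : ∀ h x, ℓ h x ≤ m)
    (K : ℕ) (βs : Fin (K + 1) → ℝ)
    (h0 : βs 0 = 0)
    (β : ℝ) (hβ : βs (Fin.last K) = β)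
    (F : H → (Fin n → X) → ℝ)
    (hFmeas : Measurable fun p : H × (Fin n → X) => F p.1 p.2)
    (hFint : Integrable (fun p : H × (Fin n → X) => Real.exp (F p.1 p.2))
      (pri.prod (Measure.pi fun _ : Fin n => μ)))
    (δ : ℝ) (hδ : 0 < δ) :
    ∫⁻ x, (gibbsP pri n ℓ β x)
        {h | Gam pri n ℓ βs h x
              + Real.log (∫ x', ∫ g, Real.exp (F g x') ∂pri
                  ∂(Measure.pi fun _ : Fin n => μ))
              + Real.log (1 / δ) < F h x}
      ∂(Measure.pi fun _ : Fin n => μ) ≤ ENNReal.ofReal δ := by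
  set μn := Measure.pi fun _ : Fin n => μ
  set M := ∫ x', ∫ g, exp (F g x') ∂pri ∂μn
  have hM : ∫ p, exp (F p.1 p.2) ∂(pri.prod μn) = M := by
    rw [integral_prod _ hFint]
    exact integral_integral_swap hFint
  have hMpos : 0 < M := hM ▸ integral_exp_pos hFint
  have hweight : exp (-(log M + log (1 / δ))) = δ / M := by
    rw [one_div, log_inv, ← sub_eq_add_neg, neg_sub, exp_sub, exp_log hδ, exp_log hMpos]
  have hℓ : ∀ h x, |ℓ h x| ≤ |m| := fun h x =>
    (abs_of_nonneg (hℓnonneg h x)).trans_le ((hℓbound h x).trans (le_abs_self m))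
  have hmass : ∀ x, gibbsP pri n ℓ β x {h | Gam pri n ℓ βs h x + log M + log (1 / δ) < F h x}
      ≤ ENNReal.ofReal (δ / M) * ∫⁻ h, ENNReal.ofReal (exp (F h x)) ∂pri := fun x => by
    have hFx : Measurable fun h => F h x := hFmeas.comp measurable_prodMk_right
    simpa only [add_assoc, hβ, hweight] using
      gibbsP_setOf_lt_le pri hℓmeas (abs_nonneg m) hℓ βs h0 x hFx (log M + log (1 / δ))
  calc _ ≤ ∫⁻ x, ENNReal.ofReal (δ / M) * ∫⁻ h, ENNReal.ofReal (exp (F h x)) ∂pri ∂μn :=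
        lintegral_mono hmass
    _ = ENNReal.ofReal (δ / M) * ENNReal.ofReal M := by
        rw [lintegral_const_mul _ hFmeas.exp.ennreal_ofReal.lintegral_prod_left',
          ← lintegral_prod_symm _ hFint.aemeasurable.ennreal_ofReal,
          ← ofReal_integral_eq_lintegral_ofReal hFint (ae_of_all _ fun _ => (exp_pos _).le), hM]
    _ = ENNReal.ofReal δ := by
        rw [← ENNReal.ofReal_mul (div_nonneg hδ.le hMpos.le), div_mul_cancel₀ δ hMpos.ne']

/-- with probability at least `1-δ` when `x ∼ μⁿ` and `h ∼ G_β(x)`,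
`F(h,x) ≤ Γ(h,x,β⃗) + ln E_x E_{g∼π}[e^{F(g,x)}] + ln(1/δ)`. -/
theorem main_bound_single_draw {H X : Type*} [MeasurableSpace H] [MeasurableSpace X]
    (μ : Measure X) [IsProbabilityMeasure μ]
    (pri : Measure H) [IsProbabilityMeasure pri]
    (n : ℕ) (hn : 0 < n)
    (ℓ : H → X → ℝ) (hℓmeas : Measurable fun p : H × X => ℓ p.1 p.2)
    (m : ℝ) (hℓnonneg : ∀ h x, 0 ≤ ℓ h x) (hℓbound : ∀ h x, ℓ h x ≤ m)
    (K : ℕ) (hK : 0 < K) (βs : Fin (K + 1) → ℝ)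
    (hmono : StrictMono βs) (h0 : βs 0 = 0)
    (β : ℝ) (hβ : βs (Fin.last K) = β) (hβpos : 0 < β)
    (F : H → (Fin n → X) → ℝ)
    (hFmeas : Measurable fun p : H × (Fin n → X) => F p.1 p.2)
    (hFint : Integrable (fun p : H × (Fin n → X) => Real.exp (F p.1 p.2))
      (pri.prod (Measure.pi fun _ : Fin n => μ)))
    (δ : ℝ) (hδ : 0 < δ) :
    ∫⁻ x, (gibbsP pri n ℓ β x)
        {h | Gam pri n ℓ βs h x
              + Real.log (∫ x', ∫ g, Real.exp (F g x') ∂pri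
                  ∂(Measure.pi fun _ : Fin n => μ))
              + Real.log (1 / δ) < F h x}
      ∂(Measure.pi fun _ : Fin n => μ) ≤ ENNReal.ofReal δ :=
  main_bound_single_draw_general μ pri n ℓ hℓmeas m hℓnonneg hℓbound K βs h0 β hβ F hFmeas hFint δ
    hδ
end

section
/- Let Y and X ≥ 0 be real random variables, ψ: ℝ × (0,1) → ℝ increasing in its first argument, and suppose for all C > 1 and δ ∈ (0,1): Pr{X ≤ C and Y > ψ(C,δ)} < δ. Then for every ε > 0 and δ ∈ (0,1): Pr{X ≥ 1 and Y > ψ(X(1+ε), δε/(X(1+ε)))} ≤ δ. -/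
open MeasureTheory Set
open scoped ENNReal

/-! Cut `{1 ≤ X}` into the shells `(1 + ε)^k ≤ X < (1 + ε)^(k+1)`. On the `k`-th shell the event
lies in the union, over the values `x` of the shell, of the events
`X ≤ x (1 + ε) ∧ ψ (x (1 + ε)) (δ ε / (x (1 + ε))) < Y`, each of measure at most
`δ ε / (1 + ε)^(k+1)`. Uncountable as it is, this union is a union of events of the form
`P ∩ {a < Y}`, which are nested, so it is already exhausted by countably many rational thresholds
and has the same bound. Summing the geometric series over the shells gives `δ`. -/

section

variable {Ω : Type*} [MeasurableSpace Ω] {μ : Measure Ω}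

theorem measure_inter_setOf_exists_lt_le {P : Set Ω} {Y : Ω → ℝ} {s : Set ℝ} {c : ℝ≥0∞}
    (h : ∀ a ∈ s, μ (P ∩ {ω | a < Y ω}) ≤ c) : μ (P ∩ {ω | ∃ a ∈ s, a < Y ω}) ≤ c := by
  set f : ℚ → Set Ω := fun q => P ∩ {ω | (q : ℝ) < Y ω}
  set T : Set ℚ := {q | ∃ a ∈ s, a < q}
  have hf : Antitone f := fun q₁ q₂ hq ω ⟨hP, hω⟩ =>
    ⟨hP, (show (q₁ : ℝ) ≤ q₂ by exact_mod_cast hq).trans_lt hω⟩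
  have hunion : P ∩ {ω | ∃ a ∈ s, a < Y ω} = ⋃ q ∈ T, f q := by
    ext ω
    simp only [f, T, mem_inter_iff, mem_ofPred, mem_iUnion, exists_prop]
    constructor
    · rintro ⟨hP, a, ha, haY⟩
      obtain ⟨q, haq, hqY⟩ := exists_rat_btwn haY
      exact ⟨q, ⟨a, ha, haq⟩, hP, hqY⟩
    · rintro ⟨q, ⟨a, ha, haq⟩, hP, hqY⟩
      exact ⟨hP, a, ha, haq.trans hqY⟩
  have hdir : DirectedOn (Function.onFun (· ⊆ ·) f) T := by
    intro q₁ h₁ q₂ h₂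
    rcases le_total q₁ q₂ with hq | hq
    exacts [⟨q₁, h₁, subset_rfl, hf hq⟩, ⟨q₂, h₂, hf hq, subset_rfl⟩]
  rw [hunion, measure_biUnion_eq_iSup T.to_countable hdir]
  refine iSup₂_le fun q ⟨a, ha, haq⟩ => (measure_mono ?_).trans (h a ha)
  exact inter_subset_inter_right _ fun ω hω => haq.trans hω

theorem hasSum_mul_div_one_add_pow_succ (δ : ℝ) {ε : ℝ} (hε : 0 < ε) :
    HasSum (fun k : ℕ => δ * ε / (1 + ε) ^ (k + 1)) δ := by
  have hr : (1 + ε)⁻¹ < 1 := inv_lt_one_of_one_lt₀ (by linarith)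
  have hgeom := (hasSum_geometric_of_lt_one (by positivity) hr).mul_left (δ * ε / (1 + ε))
  have hterm : (fun k : ℕ => δ * ε / (1 + ε) ^ (k + 1)) =
      fun k => δ * ε / (1 + ε) * (1 + ε)⁻¹ ^ k := by
    funext k
    rw [pow_succ, inv_pow]
    field_simp
  have hsum : δ * ε / (1 + ε) * (1 - (1 + ε)⁻¹)⁻¹ = δ := by
    field_simp [hε.ne']
    ring
  rw [hterm]
  simpa only [hsum] using hgeom

theorem measure_setOf_mem_lt_le {X Y : Ω → ℝ} {g u : ℝ → ℝ} {s : Set ℝ} {c : ℝ≥0∞}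
    (hu : ∀ x ∈ s, ∀ y ∈ s, y ≤ u x) (h : ∀ x ∈ s, μ {ω | X ω ≤ u x ∧ g x < Y ω} ≤ c) :
    μ {ω | X ω ∈ s ∧ g (X ω) < Y ω} ≤ c :=
  calc μ {ω | X ω ∈ s ∧ g (X ω) < Y ω}
      ≤ μ (X ⁻¹' s ∩ {ω | ∃ a ∈ g '' s, a < Y ω}) :=
        measure_mono fun _ hω => ⟨hω.1, _, mem_image_of_mem g hω.1, hω.2⟩
    _ ≤ c := by
        refine measure_inter_setOf_exists_lt_le (forall_mem_image.2 fun x hx => ?_)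
        refine (measure_mono ?_).trans (h x hx)
        exact fun _ hω => ⟨hu x hx _ hω.1, hω.2⟩

end

theorem stratification_general {Ω : Type*} [MeasurableSpace Ω]
    (μ : Measure Ω)
    (X Y : Ω → ℝ)
    (ψ : ℝ → ℝ → ℝ)
    (H : ∀ C > (1 : ℝ), ∀ δ ∈ Set.Ioo (0 : ℝ) 1,
      μ {ω | X ω ≤ C ∧ ψ C δ < Y ω} < ENNReal.ofReal δ) :
    ∀ ε > (0 : ℝ), ∀ δ ∈ Set.Ioo (0 : ℝ) 1,
      μ {ω | 1 ≤ X ω ∧ ψ (X ω * (1 + ε)) (δ * ε / (X ω * (1 + ε))) < Y ω}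
        ≤ ENNReal.ofReal δ := by
  intro ε hε δ ⟨hδ0, hδ1⟩
  have hgeom := hasSum_mul_div_one_add_pow_succ δ hε
  set r := 1 + ε
  have hr : 1 < r := by linarith
  set g : ℝ → ℝ := fun x => ψ (x * r) (δ * ε / (x * r))
  have hshell (k : ℕ) : μ {ω | X ω ∈ Ico (r ^ k) (r ^ (k + 1)) ∧ g (X ω) < Y ω}
      ≤ ENNReal.ofReal (δ * ε / r ^ (k + 1)) := by
    have hle (x : ℝ) (hx : x ∈ Ico (r ^ k) (r ^ (k + 1))) : r ^ (k + 1) ≤ x * r := by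
      rw [pow_succ]; gcongr; exact hx.1
    refine measure_setOf_mem_lt_le (u := (· * r)) (fun x hx y hy => hy.2.le.trans (hle x hx))
      fun x hx => ?_
    have hx1 : 1 ≤ x := (one_le_pow₀ hr.le).trans hx.1
    calc μ {ω | X ω ≤ x * r ∧ g x < Y ω} ≤ ENNReal.ofReal (δ * ε / (x * r)) :=
          (H _ (by nlinarith) _ ⟨by positivity, (div_lt_one (by positivity)).2 (by nlinarith)⟩).le
      _ ≤ ENNReal.ofReal (δ * ε / r ^ (k + 1)) :=
          ENNReal.ofReal_le_ofReal <|
            div_le_div_of_nonneg_left (by positivity) (by positivity) (hle x hx)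
  have hcover : {ω | 1 ≤ X ω ∧ g (X ω) < Y ω} ⊆
      ⋃ k : ℕ, {ω | X ω ∈ Ico (r ^ k) (r ^ (k + 1)) ∧ g (X ω) < Y ω} := fun ω ⟨hX1, hY⟩ =>
    mem_iUnion.2 ⟨_, (exists_nat_pow_near hX1 hr).choose_spec, hY⟩
  calc μ {ω | 1 ≤ X ω ∧ g (X ω) < Y ω}
      ≤ ∑' k : ℕ, μ {ω | X ω ∈ Ico (r ^ k) (r ^ (k + 1)) ∧ g (X ω) < Y ω} :=
        (measure_mono hcover).trans (measure_iUnion_le _)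
    _ ≤ ∑' k : ℕ, ENNReal.ofReal (δ * ε / r ^ (k + 1)) := ENNReal.tsum_le_tsum hshell
    _ = ENNReal.ofReal δ := by
        rw [← ENNReal.ofReal_tsum_of_nonneg (fun k => by positivity) hgeom.summable, hgeom.tsum_eq]

/-- stratification lemma. If for all `C > 1` and `δ ∈ (0,1)` we have
`Pr{X ≤ C ∧ Y > ψ(C,δ)} < δ`, then for every `ε > 0` and `δ ∈ (0,1)`,
`Pr{X ≥ 1 ∧ Y > ψ(X(1+ε), δε/(X(1+ε)))} ≤ δ`. -/
theorem stratification {Ω : Type*} [MeasurableSpace Ω]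
    (μ : Measure Ω) [IsProbabilityMeasure μ]
    (X Y : Ω → ℝ) (hX : ∀ ω, 0 ≤ X ω)
    (ψ : ℝ → ℝ → ℝ) (hψ : ∀ δ, Monotone fun C => ψ C δ)
    (H : ∀ C > (1 : ℝ), ∀ δ ∈ Set.Ioo (0 : ℝ) 1,
      μ {ω | X ω ≤ C ∧ ψ C δ < Y ω} < ENNReal.ofReal δ) :
    ∀ ε > (0 : ℝ), ∀ δ ∈ Set.Ioo (0 : ℝ) 1,
      μ {ω | 1 ≤ X ω ∧ ψ (X ω * (1 + ε)) (δ * ε / (X ω * (1 + ε))) < Y ω}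
        ≤ ENNReal.ofReal δ :=
  stratification_general μ X Y ψ H
end
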